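/- arXiv:2211.12647 — 5 statements merged into one kernel-verified Lean document; each statement's English description precedes it below -/
import Mathlib

section
/- For every real number x > 0 and every y in [0,1], the generalized harmonic number satisfies H_{x+y} - H_x ≤ y/(x+y), where H_x = Σ_{k=1}^∞ x/(k(x+k)). -/
/-!
Termwise, `H_b - H_a = ∑ₖ (b - a) / ((a + k + 1) (b + k + 1))`. For `b = x + y` with `y ≤ 1`
each summand is at most `y / ((x + y + k) (x + y + k + 1)) = y / (x + y + k) - y / (x + y + k + 1)`,
and these telescope to `y / (x + y)`.
-/

/-- Generalized harmonic number `H x = ∑_{k=1}^∞ x / (k (x+k))`. -/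
noncomputable def genHarmonic (x : ℝ) : ℝ := ∑' k : ℕ, x / ((k + 1) * (x + (k + 1)))

open Finset

lemma genHarmonic_term_le (c : ℝ) (hc : 0 ≤ c) (k : ℕ) :
    c / ((k + 1) * (c + (k + 1))) ≤ c * (1 / ((k : ℝ) + 1) ^ 2) := by
  rw [mul_one_div, sq]
  gcongr c / (_ * ?_)
  linarith

lemma summable_genHarmonic_term (c : ℝ) (hc : 0 ≤ c) :
    Summable fun k : ℕ => c / ((k + 1) * (c + (k + 1))) := by
  have hsq : Summable fun k : ℕ => 1 / ((k : ℝ) + 1) ^ 2 := by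
    exact_mod_cast (summable_nat_add_iff 1).mpr
      (Real.summable_one_div_nat_pow.mpr one_lt_two)
  exact .of_nonneg_of_le (fun k => by positivity) (genHarmonic_term_le c hc) (hsq.mul_left c)

lemma genHarmonic_term_sub (a b : ℝ) (ha : 0 ≤ a) (hb : 0 ≤ b) (k : ℕ) :
    b / ((k + 1) * (b + (k + 1))) - a / ((k + 1) * (a + (k + 1))) =
      (b - a) / ((a + k + 1) * (b + k + 1)) := by
  have hk : (0 : ℝ) < k + 1 := by positivity
  field_simp
  ring

lemma genHarmonic_sub (a b : ℝ) (ha : 0 ≤ a) (hb : 0 ≤ b) :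
    genHarmonic b - genHarmonic a = ∑' k : ℕ, (b - a) / ((a + k + 1) * (b + k + 1)) := by
  rw [genHarmonic, genHarmonic,
    ← (summable_genHarmonic_term b hb).tsum_sub (summable_genHarmonic_term a ha)]
  exact tsum_congr (genHarmonic_term_sub a b ha hb)

lemma sum_range_div_mul_add_one_le (a c : ℝ) (ha : 0 < a) (hc : 0 ≤ c) (n : ℕ) :
    ∑ k ∈ range n, c / ((a + k) * (a + k + 1)) ≤ c / a := by
  have htelescope : ∀ k : ℕ, c / ((a + k) * (a + k + 1)) = c / (a + k) - c / (a + (k + 1 : ℕ)) := by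
    intro k
    have : 0 < a + k := by positivity
    push_cast
    field_simp
    ring
  simp only [htelescope, sum_range_sub', Nat.cast_zero, add_zero]
  have : 0 ≤ c / (a + n) := by positivity
  linarith

theorem harmonic_growth (x y : ℝ) (hx : 0 < x) (hy0 : 0 ≤ y) (hy1 : y ≤ 1) :
    genHarmonic (x + y) - genHarmonic x ≤ y / (x + y) := by
  have hxy : 0 < x + y := by positivity
  rw [genHarmonic_sub x (x + y) hx.le hxy.le, add_sub_cancel_left]
  refine Real.tsum_le_of_sum_range_le (fun k => by positivity) fun n => ?_
  calc ∑ k ∈ range n, y / ((x + k + 1) * (x + y + k + 1))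
      ≤ ∑ k ∈ range n, y / ((x + y + k) * (x + y + k + 1)) := by
        gcongr ∑ _ ∈ _, y / (?_ * _)
        linarith
    _ ≤ y / (x + y) := sum_range_div_mul_add_one_le (x + y) y hxy hy0 n
end

section
/- Let r > 0 and t ≥ 1 be real numbers. Consider a nonincreasing nonnegative finite sequence whose first element is t−1, followed by an arithmetic subsequence a_1, …, a_{⌈tr⌉−⌈r⌉} with common difference −1/r, followed by ⌈r⌉−1 further terms b_1, …, b_{⌈r⌉−1}. If t−1−a_1 ≤ 1/r, then the arithmetic mean of the entire sequence (of length ⌈tr⌉) is at least (t−2+1/t)/2. -/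
/-!
Write `s = t - 1`, so the claimed bound is `s² / (2t)`. The arithmetic part forces
`u j ≥ s - j / r` as long as this is positive, i.e. for `j ≤ ⌊s r⌋`, and those indices all
lie in the arithmetic part. Summing this triangle gives at least `s (s r + 1) / 2`, which
beats `L s² / (2t)` because `L < t r + 1` and `s ≤ t`.
-/

open Finset

theorem Nat.floor_sub_le_ceil_sub_ceil {R : Type*} [Field R] [LinearOrder R]
    [IsStrictOrderedRing R] [FloorSemiring R] {a b : R} (ha : 0 ≤ a) :
    ⌊b - a⌋₊ ≤ ⌈b⌉₊ - ⌈a⌉₊ := by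
  rcases lt_or_ge (b - a) 0 with hba | hba
  · simp [Nat.floor_of_nonpos hba.le]
  have h : (⌊b - a⌋₊ + ⌈a⌉₊ : R) < ⌈b⌉₊ + 1 := by
    linarith [Nat.floor_le hba, Nat.ceil_lt_add_one ha, Nat.le_ceil b]
  have : ⌊b - a⌋₊ + ⌈a⌉₊ < ⌈b⌉₊ + 1 := by exact_mod_cast h
  omega

theorem sub_mul_le_of_forall_sub_le {a d : ℝ} {M : ℕ} {u : ℕ → ℝ} (h0 : a ≤ u 0)
    (hstep : ∀ j < M, u j - d ≤ u (j + 1)) : ∀ j ≤ M, a - j * d ≤ u j := by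
  intro j hj
  induction j with
  | zero => simpa using h0
  | succ j ih =>
    have := hstep j hj
    push_cast
    linarith [ih (by omega)]

theorem sum_range_sub_mul (a d : ℝ) (n : ℕ) :
    ∑ j ∈ range (n + 1), (a - j * d) = (n + 1) * a - n * (n + 1) / 2 * d := by
  have gauss : ((∑ j ∈ range (n + 1), j : ℕ) : ℝ) * 2 = (n + 1) * n := by
    exact_mod_cast sum_range_id_mul_two (n + 1)
  rw [sum_sub_distrib, ← sum_mul, ← Nat.cast_sum]
  simp only [sum_const, card_range, nsmul_eq_mul]
  push_cast at gauss ⊢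
  linear_combination (-d / 2) * gauss

theorem le_sum_range_floor_sub_div {s r : ℝ} (hs : 0 ≤ s) (hr : 0 < r) :
    s * (s * r + 1) / 2 ≤ ∑ j ∈ range (⌊s * r⌋₊ + 1), (s - j / r) := by
  set K := ⌊s * r⌋₊
  have hK : (K : ℝ) ≤ s * r := Nat.floor_le (by positivity)
  have hK' : s * r < K + 1 := Nat.lt_floor_add_one _
  have hsum := sum_range_sub_mul s r⁻¹ K
  simp only [← div_eq_mul_inv] at hsum
  have key : 0 ≤ (s * r - K) * (K + 1 - s * r) := mul_nonneg (by linarith) (by linarith)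
  rw [hsum, ← sub_nonneg, show (K + 1) * s - K * (K + 1) / 2 / r - s * (s * r + 1) / 2
    = (s * r - K) * (K + 1 - s * r) / (2 * r) by field_simp; ring]
  exact div_nonneg key (by positivity)

theorem average_claim_general (r t : ℝ) (hr : 0 < r) (ht : 1 ≤ t)
    (L M : ℕ) (hL : L = ⌈t * r⌉₊) (hM : M = ⌈t * r⌉₊ - ⌈r⌉₊)
    (u : ℕ → ℝ)
    (h0 : u 0 = t - 1)
    (hnonneg : ∀ j, j < L → 0 ≤ u j)
    (harith : ∀ j, 1 ≤ j → j + 1 ≤ M → u (j + 1) = u j - 1 / r)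
    (ha1 : 1 ≤ M → t - 1 - u 1 ≤ 1 / r) :
    (∑ j ∈ Finset.range L, u j) / L ≥ (t - 2 + 1 / t) / 2 := by
  set s := t - 1
  have hs : 0 ≤ s := by linarith
  set K := ⌊s * r⌋₊
  have hKM : K ≤ M := by
    have := Nat.floor_sub_le_ceil_sub_ceil (b := t * r) hr.le
    rwa [show t * r - r = s * r by ring, ← hM] at this
  have hLr : (L : ℝ) < t * r + 1 := hL ▸ Nat.ceil_lt_add_one (by positivity)
  have hrL : t * r ≤ L := hL ▸ Nat.le_ceil _
  have hKL : K + 1 ≤ L := (Nat.floor_lt (by positivity)).2 (by linarith)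
  have hlower : ∀ j ≤ M, s - j * (1 / r) ≤ u j := by
    refine sub_mul_le_of_forall_sub_le h0.ge fun j hj => ?_
    rcases j with _ | j
    · linarith [ha1 hj]
    · rw [harith (j + 1) (by omega) hj]
  have hL0 : (0 : ℝ) < L := by exact_mod_cast (Nat.succ_pos K).trans_le hKL
  rw [ge_iff_le, le_div_iff₀ hL0, show (t - 2 + 1 / t) / 2 = s ^ 2 / (2 * t) by field_simp; ring]
  calc s ^ 2 / (2 * t) * L ≤ s ^ 2 / (2 * t) * (t * r + 1) := by gcongr
    _ ≤ s * (s * r + 1) / 2 := by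
      rw [div_mul_eq_mul_div, div_le_iff₀ (by positivity)]
      nlinarith
    _ ≤ ∑ j ∈ range (K + 1), (s - j / r) := le_sum_range_floor_sub_div hs hr
    _ ≤ ∑ j ∈ range (K + 1), u j := sum_le_sum fun j hj => by
      simpa only [mul_one_div] using hlower j (by simp at hj; omega)
    _ ≤ ∑ j ∈ range L, u j := sum_le_sum_of_subset_of_nonneg (range_subset_range.2 hKL)
      fun j hj _ => hnonneg j (mem_range.1 hj)

theorem average_claim (r t : ℝ) (hr : 0 < r) (ht : 1 ≤ t)
    (L M : ℕ) (hL : L = ⌈t * r⌉₊) (hM : M = ⌈t * r⌉₊ - ⌈r⌉₊)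
    (u : ℕ → ℝ)
    (h0 : u 0 = t - 1)
    (hnonneg : ∀ j, j < L → 0 ≤ u j)
    (hmono : ∀ i j, i ≤ j → j < L → u j ≤ u i)
    (harith : ∀ j, 1 ≤ j → j + 1 ≤ M → u (j + 1) = u j - 1 / r)
    (ha1 : 1 ≤ M → t - 1 - u 1 ≤ 1 / r) :
    (∑ j ∈ Finset.range L, u j) / L ≥ (t - 2 + 1 / t) / 2 :=
  average_claim_general r t hr ht L M hL hM u h0 hnonneg harith ha1
end

section
/- Let r > 0 and t ≥ 1 be real numbers, and let a_0 = t−1, a_1, …, a_M be a nonincreasing nonnegative sequence with M = ⌈tr⌉−⌈r⌉, where a_1,…,a_M is arithmetic with common difference −1/r and t−1−a_1 ≤ 1/r. Then the average (1/(M+1))·Σ_{j=0}^M a_j is at least (t−1)/2. -/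
/-!
Pair the term `a j` with its mirror image `a (M - j)`. For `0 < j < M` both terms lie in the
arithmetic part, so the pair sum is constant, equal to `a 1 + a M + 1/r ≥ (t - 1 - 1/r) + 0 + 1/r`;
the pairs with `j = 0` or `j = M` are `(t - 1) + a M`. Every pair therefore sums to at least
`t - 1`, and summing over all `j` counts each term twice.
-/

open Finset

section ArithmeticTail

variable {M : ℕ} {a : ℕ → ℝ} {d : ℝ}

theorem apply_succ_eq_of_arith (harith : ∀ j, 1 ≤ j → j + 1 ≤ M → a (j + 1) = a j - d) :
    ∀ n, n + 1 ≤ M → a (n + 1) = a 1 - n * d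
  | 0, _ => by simp
  | n + 1, hn => by
    rw [harith (n + 1) (by omega) hn, apply_succ_eq_of_arith harith n (by omega)]
    push_cast
    ring

theorem add_apply_sub_eq_of_arith (harith : ∀ j, 1 ≤ j → j + 1 ≤ M → a (j + 1) = a j - d)
    {j : ℕ} (hj₀ : 1 ≤ j) (hjM : j < M) :
    a j + a (M - j) = a 1 + a M + d := by
  obtain ⟨p, rfl⟩ : ∃ p, j = p + 1 := ⟨j - 1, by omega⟩
  obtain ⟨q, hq⟩ : ∃ q, M - (p + 1) = q + 1 := ⟨M - p - 2, by omega⟩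
  have hM : M = p + q + 1 + 1 := by omega
  rw [hq, apply_succ_eq_of_arith harith p (by omega), apply_succ_eq_of_arith harith q (by omega),
    hM, apply_succ_eq_of_arith harith (p + q + 1) (by omega)]
  push_cast
  ring

end ArithmeticTail

theorem mul_le_two_mul_sum_of_le_add_apply_sub {M : ℕ} {f : ℕ → ℝ} {c : ℝ}
    (h : ∀ j ≤ M, c ≤ f j + f (M - j)) :
    (M + 1) * c ≤ 2 * ∑ j ∈ range (M + 1), f j :=
  calc (M + 1) * c = ∑ _j ∈ range (M + 1), c := by simp
    _ ≤ ∑ j ∈ range (M + 1), (f j + f (M - j)) :=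
        sum_le_sum fun j hj => h j (Nat.lt_succ_iff.mp (mem_range.mp hj))
    _ = 2 * ∑ j ∈ range (M + 1), f j := by
        have hreflect := sum_range_reflect f (M + 1)
        rw [Nat.add_sub_cancel] at hreflect
        rw [sum_add_distrib, hreflect]
        ring

theorem average_head_claim_general (r t : ℝ)
    (M : ℕ)
    (a : ℕ → ℝ)
    (h0 : a 0 = t - 1)
    (hnonneg : ∀ j, j ≤ M → 0 ≤ a j)
    (harith : ∀ j, 1 ≤ j → j + 1 ≤ M → a (j + 1) = a j - 1 / r)
    (ha1 : 1 ≤ M → t - 1 - a 1 ≤ 1 / r) :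
    (∑ j ∈ Finset.range (M + 1), a j) / (M + 1) ≥ (t - 1) / 2 := by
  have haM := hnonneg M le_rfl
  have hpair : ∀ j ≤ M, t - 1 ≤ a j + a (M - j) := by
    intro j hj
    rcases Nat.eq_zero_or_pos j with rfl | hj₀
    · simp [h0, haM]
    rcases hj.eq_or_lt with rfl | hjM
    · simp [h0, haM]
    rw [add_apply_sub_eq_of_arith harith hj₀ hjM]
    linarith [ha1 (by omega)]
  have hsum := mul_le_two_mul_sum_of_le_add_apply_sub hpair
  rw [ge_iff_le, div_le_div_iff₀ two_pos (by positivity)]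
  linarith

theorem average_head_claim (r t : ℝ) (hr : 0 < r) (ht : 1 ≤ t)
    (M : ℕ) (hM : M = ⌈t * r⌉₊ - ⌈r⌉₊)
    (a : ℕ → ℝ)
    (h0 : a 0 = t - 1)
    (hnonneg : ∀ j, j ≤ M → 0 ≤ a j)
    (hmono : ∀ i j, i ≤ j → j ≤ M → a j ≤ a i)
    (harith : ∀ j, 1 ≤ j → j + 1 ≤ M → a (j + 1) = a j - 1 / r)
    (ha1 : 1 ≤ M → t - 1 - a 1 ≤ 1 / r) :
    (∑ j ∈ Finset.range (M + 1), a j) / (M + 1) ≥ (t - 1) / 2 :=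
  average_head_claim_general r t M a h0 hnonneg harith ha1
end

section
/- For all real numbers t ≥ 1: ⌊t⌋·(1 − (⌊t⌋+1)/(2t)) ≥ (t−2+1/t)/2, i.e., the proportionality-degree bound implied by EJR-M is at least that implied by EJR-1. -/
/-! With `n = ⌊t⌋` and `f = t - n ∈ [0, 1)`, clearing the denominator `2t` turns the inequality into
`2nt - n(n+1) - (t-1)² ≥ 0`, and the left side equals `(n - 1) + f(2 - f)`. -/

lemma sq_sub_one_le_two_mul_mul_sub {n t : ℝ} (hn : 1 ≤ n) (hnt : n ≤ t) (htn : t ≤ n + 2) :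
    (t - 1) ^ 2 ≤ 2 * n * t - n * (n + 1) := by
  nlinarith [mul_nonneg (sub_nonneg.2 hnt) (sub_nonneg.2 htn)]

lemma half_sub_two_add_inv_le_mul_one_sub {n t : ℝ} (hn : 1 ≤ n) (hnt : n ≤ t) (htn : t ≤ n + 2) :
    (t - 2 + 1 / t) / 2 ≤ n * (1 - (n + 1) / (2 * t)) := by
  have ht : 0 < t := by linarith
  have hlhs : (t - 2 + 1 / t) / 2 = (t - 1) ^ 2 / (2 * t) := by field_simp; ring
  have hrhs : n * (1 - (n + 1) / (2 * t)) = (2 * n * t - n * (n + 1)) / (2 * t) := by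
    field_simp
  rw [hlhs, hrhs]
  gcongr
  exact sq_sub_one_le_two_mul_mul_sub hn hnt htn

theorem EJRM_bound_ge_EJR1_bound (t : ℝ) (ht : 1 ≤ t) :
    (⌊t⌋ : ℝ) * (1 - ((⌊t⌋ : ℝ) + 1) / (2 * t)) ≥ (t - 2 + 1 / t) / 2 := by
  have h_one_le_floor : (1 : ℝ) ≤ ⌊t⌋ := by exact_mod_cast Int.le_floor.2 (by exact_mod_cast ht)
  exact half_sub_two_add_inv_le_mul_one_sub h_one_le_floor (Int.floor_le t)
    (by linarith [Int.lt_floor_add_one t])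
end

section
/- Let t ≥ 2 be a real number, k = ⌊t⌋, and r a positive integer with ⌈tr⌉ ≤ (k+1)r − 1. Define N_j to have size r for j = 1,…,k−1, N_0 size r−1, and N_k size ⌈tr⌉ − kr + 1, so that the total is ⌈tr⌉. Then (1/⌈tr⌉)·Σ_{j=0}^{k} |N_j|·j ≤ k·(1 − (k+1)/(2t)) + k(k²+k+2)·α/(n·t) where α = (k²+k+2)/2 and n = αr. -/
/-!
The total satisfaction collapses to `K * (L + 1 - r (K + 1) / 2)`, so after factoring out `K`
only the average per unit remains. Since `t r ≤ L ≤ t r + 1` and `t ≥ 2`, the ceiling costs at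
most `(K + 1) / 4` in the numerator, and together with the extra `+ 1` this is absorbed by the
slack `(K² + K + 2) / (r t)`; the last term of the bound is exactly that slack because `α / n = 1 / r`.
-/

open Finset

lemma sum_range_pred_natCast_add_one (m : ℕ) :
    ∑ j ∈ range (m - 1), ((j : ℝ) + 1) = m * (m - 1) / 2 := by
  induction m with
  | zero => simp
  | succ k ih =>
    cases k with
    | zero => simp
    | succ k =>
      simp only [Nat.add_sub_cancel] at ih ⊢
      rw [sum_range_succ, ih]
      push_cast
      ring

lemma add_one_sub_div_le_of_ceil_bounds {t r L K : ℝ} (ht : 2 ≤ t) (hr : 0 < r) (hK : 0 ≤ K)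
    (hL₁ : t * r ≤ L) (hL₂ : L ≤ t * r + 1) :
    (L + 1 - r * (K + 1) / 2) / L ≤ 1 - (K + 1) / (2 * t) + (K ^ 2 + K + 2) / (r * t) := by
  have htr : 0 < t * r := by positivity
  rw [div_le_iff₀ (htr.trans_le hL₁)]
  set a := (K + 1) / (2 * t) with ha
  set b := (K ^ 2 + K + 2) / (r * t) with hb
  have ha_tr : a * (t * r) = r * (K + 1) / 2 := by rw [ha]; field_simp
  have hb_tr : b * (t * r) = K ^ 2 + K + 2 := by rw [hb]; field_simp
  have ha_le : a ≤ (K + 1) / 4 := by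
    rw [ha]; gcongr; linarith
  have hexcess : a * (L - t * r) ≤ (K + 1) / 4 :=
    (mul_le_of_le_one_right (by positivity) (by linarith)).trans ha_le
  have hbL : K ^ 2 + K + 2 ≤ b * L := hb_tr ▸ mul_le_mul_of_nonneg_left hL₁ (by positivity)
  linarith [sq_nonneg K]

theorem greedyEJRM_average_satisfaction_upper_general (t : ℝ) (ht : 2 ≤ t)
    (K : ℕ) (r : ℕ) (hr : 0 < r)
    (L : ℕ) (hL : L = ⌈t * r⌉₊)
    (α : ℝ) (hα : α = ((K : ℝ) ^ 2 + K + 2) / 2)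
    (n : ℝ) (hn : n = α * r) :
    ((∑ j ∈ Finset.range (K - 1), (r : ℝ) * (j + 1)) + ((L : ℝ) - K * r + 1) * K) / L ≤
      (K : ℝ) * (1 - ((K : ℝ) + 1) / (2 * t)) + K * ((K : ℝ) ^ 2 + K + 2) * α / (n * t) := by
  have hr' : (0 : ℝ) < r := by exact_mod_cast hr
  have hL₁ : t * r ≤ L := hL ▸ Nat.le_ceil _
  have hL₂ : (L : ℝ) ≤ t * r + 1 := hL ▸ (Nat.ceil_lt_add_one (by positivity)).le
  have hsatisfaction : (∑ j ∈ range (K - 1), (r : ℝ) * (j + 1)) + ((L : ℝ) - K * r + 1) * K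
      = K * (L + 1 - r * (K + 1) / 2) := by
    rw [← mul_sum, sum_range_pred_natCast_add_one]; ring
  have hαn : α / n = 1 / r := by
    rw [hn, hα]; field_simp
  calc _ = (K : ℝ) * (((L : ℝ) + 1 - r * (K + 1) / 2) / L) := by rw [hsatisfaction, mul_div_assoc]
    _ ≤ K * (1 - (K + 1) / (2 * t) + ((K : ℝ) ^ 2 + K + 2) / (r * t)) :=
      mul_le_mul_of_nonneg_left
        (add_one_sub_div_le_of_ceil_bounds ht hr' K.cast_nonneg hL₁ hL₂) K.cast_nonneg
    _ = _ := by
      rw [mul_div_assoc, ← div_div α, hαn]; ring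

theorem greedyEJRM_average_satisfaction_upper (t : ℝ) (ht : 2 ≤ t)
    (K : ℕ) (hK : K = ⌊t⌋₊) (r : ℕ) (hr : 0 < r)
    (L : ℕ) (hL : L = ⌈t * r⌉₊) (hLb : (L : ℝ) ≤ (K + 1) * r - 1)
    (α : ℝ) (hα : α = ((K : ℝ) ^ 2 + K + 2) / 2)
    (n : ℝ) (hn : n = α * r) :
    ((∑ j ∈ Finset.range (K - 1), (r : ℝ) * (j + 1)) + ((L : ℝ) - K * r + 1) * K) / L ≤
      (K : ℝ) * (1 - ((K : ℝ) + 1) / (2 * t)) + K * ((K : ℝ) ^ 2 + K + 2) * α / (n * t) :=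
  greedyEJRM_average_satisfaction_upper_general t ht K r hr L hL α hα n hn
end
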